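/- arXiv:1502.04411 — 3 statements merged into one kernel-verified Lean document; each statement's English description precedes it below -/
import Mathlib

section
/- Let v₁, v₂, v₃, v₄, w be five distinct monomials of A whose F-span is a Kummer space, satisfying v₁v₂ = i·v₂v₁, v₁v₃ = i·v₃v₁, v₂v₄ = i·v₄v₂, v₃v₄ = i·v₄v₃, v₁v₄ = −v₄v₁, and v₂v₃ = −v₃v₂. Then either w·v_k = i·v_k·w for all k ∈ {1, 2, 3, 4}, or v_k·w = i·w·v_k for all k ∈ {1, 2, 3, 4}. -/
/-!
Monomials are indexed by exponent vectors `e ∈ (ℤ/4)^{2n}`, and `u_e u_f = i^{ω(e,f)} u_f u_e`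
for the standard symplectic form `ω` over `ℤ/4`. A product of monomials that is a scalar commutes
with every monomial, so its exponent vectors add up to `0`.

For monomials `u_e, u_f` of a Kummer space, suitable combinations of fourth powers of elements
of the space isolate `u_e³u_f` when `ω(e,f) = 0` and `u_e²u_f²` when `ω(e,f) = 2`; for
`u_e, u_a, u_b` they isolate `u_e²u_au_b` when `(ω(e,a), ω(e,b), ω(a,b)) = (1, -1, 1 or 2)`.
These elements are therefore scalars, giving `f = e`, `2e + 2f = 0` and `2e + a + b = 0`
respectively.

Applied to `v₂` and to `v₃` with `v₄, v₁`, the last rule gives `2e₂ = 2e₃ = -(e₁ + e₄)`. No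
phase `ω(w, vₖ)` is `0` since the monomials are distinct; pairing these relations with the exponent
of `w`, and using that `2`-torsion vectors are `ω`-orthogonal, makes all of them odd with
`ω(w, v₁) = ω(w, v₄)`. Finally the last rule with `u = w` forbids the phases `1` and `-1` at the
two ends of any of the edges `v₁v₂, v₁v₃, v₂v₄, v₃v₄`.
-/

/-- A fixed presentation of a tensor product of `n` cyclic algebras of degree 4
over `F`: generators `x k`, `y k` with `(x k)⁴ = αₖ·1`, `(y k)⁴ = βₖ·1`,
`x k · y k = i · (y k · x k)`, generators with different indices commuting, and the
`x k, y k` generating `A` as an `F`-algebra. -/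
structure TensorCyclicPres (F A : Type*) [Field F] [Ring A] [Algebra F A]
    (i : F) (n : ℕ) where
  x : Fin n → A
  y : Fin n → A
  α : Fin n → F
  β : Fin n → F
  α_ne_zero : ∀ k, α k ≠ 0
  β_ne_zero : ∀ k, β k ≠ 0
  x_pow : ∀ k, x k ^ 4 = algebraMap F A (α k)
  y_pow : ∀ k, y k ^ 4 = algebraMap F A (β k)
  xy_rel : ∀ k, x k * y k = i • (y k * x k)
  xx_comm : ∀ k l, k ≠ l → Commute (x k) (x l)
  yy_comm : ∀ k l, k ≠ l → Commute (y k) (y l)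
  xy_comm : ∀ k l, k ≠ l → Commute (x k) (y l)
  generates : Algebra.adjoin F (Set.range x ∪ Set.range y) = ⊤

/-- A monomial with respect to the presentation: an element of the form
`∏ₖ (x k)^{aₖ} (y k)^{bₖ}` with `0 ≤ aₖ, bₖ ≤ 3`. -/
def TensorCyclicPres.IsMonomial {F A : Type*} [Field F] [Ring A] [Algebra F A]
    {i : F} {n : ℕ} (P : TensorCyclicPres F A i n) (v : A) : Prop :=
  ∃ a b : Fin n → Fin 4,
    v = ((List.finRange n).map (fun k => P.x k ^ (a k : ℕ) * P.y k ^ (b k : ℕ))).prod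

theorem isPrimitiveRoot_four_of_sq_eq_neg_one {F : Type*} [Field F] [NeZero (2 : F)] {i : F}
    (hi : i ^ 2 = -1) : IsPrimitiveRoot i 4 := by
  rw [IsPrimitiveRoot.iff_orderOf]
  refine orderOf_eq_prime_pow (p := 2) (n := 1) ?_
    (by rw [show 2 ^ (1 + 1) = 2 * 2 from rfl, pow_mul, hi]; norm_num)
  rw [pow_one, hi]
  exact fun h => two_ne_zero' F (by linear_combination -h)

section QCommute

variable {F A : Type*} [Field F] [Ring A] [Algebra F A]

def QCommute (q : F) (t : ZMod 4) (a b : A) : Prop := a * b = q ^ t.val • (b * a)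

variable {q : F} {s t : ZMod 4} {a b c : A}

theorem pow_zmod_val_add (hq : q ^ 4 = 1) (s t : ZMod 4) :
    q ^ (s + t).val = q ^ s.val * q ^ t.val := by
  rw [ZMod.val_add, ← pow_add]
  conv_rhs => rw [← Nat.div_add_mod (s.val + t.val) 4, pow_add, pow_mul, hq, one_pow, one_mul]

namespace QCommute

theorem one_iff : QCommute q 1 a b ↔ a * b = q • (b * a) := by
  rw [QCommute, show (1 : ZMod 4).val = 1 from rfl, pow_one]

theorem two_iff (hq : q ^ 2 = -1) : QCommute q 2 a b ↔ a * b = -(b * a) := by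
  rw [QCommute, show (2 : ZMod 4).val = 2 from rfl, hq, neg_one_smul]

theorem of_commute (h : Commute a b) : QCommute q 0 a b := by
  simp [QCommute, h.eq]

theorem commute (h : QCommute q 0 a b) : Commute a b := by
  simpa [QCommute, Commute, SemiconjBy] using h

theorem mul_right (hq : q ^ 4 = 1) (h₁ : QCommute q s a b) (h₂ : QCommute q t a c) :
    QCommute q (s + t) a (b * c) := by
  unfold QCommute at *
  rw [pow_zmod_val_add hq, ← mul_assoc, h₁, smul_mul_assoc, mul_assoc, h₂, mul_smul_comm,
    smul_smul, mul_assoc]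

theorem mul_left (hq : q ^ 4 = 1) (h₁ : QCommute q s a c) (h₂ : QCommute q t b c) :
    QCommute q (s + t) (a * b) c := by
  unfold QCommute at *
  rw [pow_zmod_val_add hq, mul_assoc, h₂, mul_smul_comm, ← mul_assoc, h₁, smul_mul_assoc,
    smul_smul, mul_assoc, mul_comm]

theorem symm (hq : q ^ 4 = 1) (h : QCommute q t a b) : QCommute q (-t) b a := by
  unfold QCommute at *
  rw [h, smul_smul, ← pow_zmod_val_add hq, neg_add_cancel, ZMod.val_zero, pow_zero, one_smul]

theorem pow_right (hq : q ^ 4 = 1) (h : QCommute q t a b) (m : ℕ) :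
    QCommute q (m * t) a (b ^ m) := by
  induction m with
  | zero => simpa using of_commute (Commute.one_right a)
  | succ m ih => simpa [pow_succ, add_mul] using ih.mul_right hq h

theorem pow_left (hq : q ^ 4 = 1) (h : QCommute q t a b) (m : ℕ) :
    QCommute q (m * t) (a ^ m) b := by
  simpa using ((h.symm hq).pow_right hq m).symm hq

theorem list_prod_right {ι : Type*} (hq : q ^ 4 = 1) {L : List ι} {f : ι → A} {t : ι → ZMod 4}
    (h : ∀ k ∈ L, QCommute q (t k) a (f k)) : QCommute q (L.map t).sum a (L.map f).prod := by
  induction L with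
  | nil => simpa using of_commute (Commute.one_right a)
  | cons k L ih =>
    simpa using (h k (by simp)).mul_right hq (ih fun k hk => h k (by simp [hk]))

theorem list_prod_left {ι : Type*} (hq : q ^ 4 = 1) {L : List ι} {f : ι → A} {t : ι → ZMod 4}
    (h : ∀ k ∈ L, QCommute q (t k) (f k) b) : QCommute q (L.map t).sum (L.map f).prod b := by
  induction L with
  | nil => simpa using of_commute (Commute.one_left b)
  | cons k L ih =>
    simpa using (h k (by simp)).mul_left hq (ih fun k hk => h k (by simp [hk]))

theorem eq_of_qCommute [IsDomain A] (hq : IsPrimitiveRoot q 4) (h₁ : QCommute q s a b)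
    (h₂ : QCommute q t a b) (hba : b * a ≠ 0) : s = t := by
  have : q ^ s.val = q ^ t.val := smul_left_injective F hba ((Eq.symm h₁).trans h₂)
  exact ZMod.val_injective 4 (hq.pow_inj (ZMod.val_lt s) (ZMod.val_lt t) this)

theorem eq_zero_of_mem_bot [IsDomain A] (hq : IsPrimitiveRoot q 4) (h : QCommute q t a b)
    (hb : b ∈ (⊥ : Subalgebra F A)) (hba : b * a ≠ 0) : t = 0 := by
  obtain ⟨r, rfl⟩ := Algebra.mem_bot.mp hb
  exact h.eq_of_qCommute hq (of_commute (Algebra.commutes r a).symm) hba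

end QCommute

end QCommute

section Kummer

variable {F A : Type*} [Field F] [Ring A] [Algebra F A]

theorem Commute.add_smul_pow_four {u v : A} (h : Commute u v) (c : F) :
    (u + c • v) ^ 4 = u ^ 4 + (4 * c) • (u ^ 3 * v) + (6 * c ^ 2) • (u ^ 2 * v ^ 2)
      + (4 * c ^ 3) • (u * v ^ 3) + c ^ 4 • v ^ 4 := by
  rw [(h.smul_right c).add_pow]
  simp only [Finset.sum_range_succ, Finset.sum_range_zero, ← nsmul_eq_mul', smul_pow,
    mul_smul_comm, ← Nat.cast_smul_eq_nsmul F, smul_smul]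
  norm_num [Nat.choose]
  match_scalars <;> ring

theorem add_pow_four_of_anticommute {u v : A} (h : v * u = -(u * v)) :
    (u + v) ^ 4 = u ^ 4 + v ^ 4 + 2 * (u ^ 2 * v ^ 2) := by
  have h' : u * v = -(v * u) := by rw [h, neg_neg]
  have hsq : (u + v) ^ 2 = u ^ 2 + v ^ 2 := by
    rw [sq, sq, sq, add_mul, mul_add, mul_add, h]; abel
  have hcomm : Commute (u ^ 2) v := by
    show u ^ 2 * v = v * u ^ 2
    rw [sq, mul_assoc, h', mul_neg, ← mul_assoc, h', neg_mul, neg_neg, mul_assoc]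
  calc (u + v) ^ 4 = ((u + v) ^ 2) ^ 2 := by rw [← pow_mul]
    _ = u ^ 4 + v ^ 4 + 2 * (u ^ 2 * v ^ 2) := by
      rw [hsq, sq, add_mul, mul_add, mul_add, ← (hcomm.pow_right 2).eq]; noncomm_ring

/-- The signed sum keeps exactly the words of odd degree in both `v` and `w`; each of the twelve
words with two letters `u` is a phase times `u * (u * (v * w))`, and the first coefficient sums
these phases. -/
theorem add_add_pow_four_combination {u v w : A} {x y z : F} (hvu : v * u = x • (u * v))
    (hwu : w * u = y • (u * w)) (hwv : w * v = z • (v * w)) :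
    (u + v + w) ^ 4 + (u - v - w) ^ 4 - (u - v + w) ^ 4 - (u + v - w) ^ 4
      = (4 * (1 + z + x + x * y + y * z + x * y * z + x ^ 2 + x ^ 2 * y + x ^ 2 * y ^ 2
          + y ^ 2 * z + x * y ^ 2 * z + x ^ 2 * y ^ 2 * z)) • (u * (u * (v * w)))
        + (4 * (1 + z + z ^ 2 + z ^ 3)) • (v * (v * (v * w)) + v * (w * (w * w))) := by
  have r1 (t : A) : v * (u * t) = x • (u * (v * t)) := by
    rw [← mul_assoc, hvu, smul_mul_assoc, mul_assoc]
  have r2 (t : A) : w * (u * t) = y • (u * (w * t)) := by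
    rw [← mul_assoc, hwu, smul_mul_assoc, mul_assoc]
  have r3 (t : A) : w * (v * t) = z • (v * (w * t)) := by
    rw [← mul_assoc, hwv, smul_mul_assoc, mul_assoc]
  have four (t : A) : (4 : A) * t = (4 : F) • t := by
    rw [Algebra.smul_def, map_ofNat]
  have expand : (u + v + w) ^ 4 + (u - v - w) ^ 4 - (u - v + w) ^ 4 - (u + v - w) ^ 4
      = 4 * (u * (u * (v * w))) + 4 * (u * (v * (u * w))) + 4 * (v * (u * (u * w)))
      + 4 * (u * (u * (w * v))) + 4 * (u * (w * (u * v))) + 4 * (w * (u * (u * v)))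
      + 4 * (u * (v * (w * u))) + 4 * (v * (u * (w * u))) + 4 * (u * (w * (v * u)))
      + 4 * (w * (u * (v * u))) + 4 * (v * (w * (u * u))) + 4 * (w * (v * (u * u)))
      + 4 * (v * (v * (v * w))) + 4 * (v * (v * (w * v))) + 4 * (v * (w * (v * v)))
      + 4 * (w * (v * (v * v))) + 4 * (v * (w * (w * w))) + 4 * (w * (v * (w * w)))
      + 4 * (w * (w * (v * w))) + 4 * (w * (w * (w * v))) := by
    noncomm_ring
  rw [expand]
  simp only [r1, r2, r3, hvu, hwu, hwv, mul_smul_comm, smul_smul, four, smul_add]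
  match_scalars <;> ring

def IsKummer (V : Submodule F A) : Prop := ∀ u ∈ V, u ^ 4 ∈ Set.range (algebraMap F A)

namespace IsKummer

variable {V : Submodule F A} {u v w : A}

theorem pow_four_mem_bot (hV : IsKummer V) (hu : u ∈ V) : u ^ 4 ∈ (⊥ : Subalgebra F A) :=
  Algebra.mem_bot.mpr (hV u hu)

theorem pow_three_mul_mem_bot [NeZero (2 : F)] {i : F} (hi : i ^ 2 = -1) (hV : IsKummer V)
    (hu : u ∈ V) (hv : v ∈ V) (h : Commute u v) : u ^ 3 * v ∈ (⊥ : Subalgebra F A) := by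
  have hmem : ∀ c : F, (u + c • v) ^ 4 ∈ (⊥ : Subalgebra F A) := fun c =>
    hV.pow_four_mem_bot (add_mem hu (V.smul_mem c hv))
  -- weighting `(u + c • v) ^ 4` by `c⁻¹` over the fourth roots of unity `c` isolates `u ^ 3 * v`
  have hsum : (u + (1 : F) • v) ^ 4 - i • (u + i • v) ^ 4 - (u + (-1 : F) • v) ^ 4
      + i • (u + (-i) • v) ^ 4 = (16 : F) • (u ^ 3 * v) := by
    simp only [h.add_smul_pow_four, smul_add, smul_smul]
    match_scalars
    · ring
    · linear_combination (-8 : F) * hi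
    · ring
    · linear_combination -8 * (i ^ 2 - 1) * hi
    · ring
  have h16 : (16 : F) ≠ 0 := by
    rw [show (16 : F) = 2 ^ 4 by norm_num]; exact pow_ne_zero _ two_ne_zero
  rw [← inv_smul_smul₀ h16 (u ^ 3 * v), ← hsum]
  refine Subalgebra.smul_mem _ (add_mem (sub_mem (sub_mem (hmem 1) ?_) (hmem (-1))) ?_) _
  · exact Subalgebra.smul_mem _ (hmem i) i
  · exact Subalgebra.smul_mem _ (hmem (-i)) i

theorem sq_mul_sq_mem_bot [NeZero (2 : F)] (hV : IsKummer V) (hu : u ∈ V) (hv : v ∈ V)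
    (h : v * u = -(u * v)) : u ^ 2 * v ^ 2 ∈ (⊥ : Subalgebra F A) := by
  have hsum : (2 : F) • (u ^ 2 * v ^ 2) = (u + v) ^ 4 - u ^ 4 - v ^ 4 := by
    rw [add_pow_four_of_anticommute h, two_smul F, two_mul]; abel
  rw [← inv_smul_smul₀ (two_ne_zero' F) (u ^ 2 * v ^ 2), hsum]
  exact Subalgebra.smul_mem _ (sub_mem (sub_mem (hV.pow_four_mem_bot (add_mem hu hv))
    (hV.pow_four_mem_bot hu)) (hV.pow_four_mem_bot hv)) _

theorem mul_mul_mul_mem_bot [NeZero (2 : F)] (hV : IsKummer V) (hu : u ∈ V) (hv : v ∈ V)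
    (hw : w ∈ V) {x y z : F} (hvu : v * u = x • (u * v)) (hwu : w * u = y • (u * w))
    (hwv : w * v = z • (v * w)) (hz : 1 + z + z ^ 2 + z ^ 3 = 0)
    (hΦ : 1 + z + x + x * y + y * z + x * y * z + x ^ 2 + x ^ 2 * y + x ^ 2 * y ^ 2
      + y ^ 2 * z + x * y ^ 2 * z + x ^ 2 * y ^ 2 * z ≠ 0) :
    u * (u * (v * w)) ∈ (⊥ : Subalgebra F A) := by
  have h4 : (4 : F) ≠ 0 := by
    rw [show (4 : F) = 2 ^ 2 by norm_num]; exact pow_ne_zero _ two_ne_zero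
  have hsum := add_add_pow_four_combination hvu hwu hwv
  rw [hz, mul_zero, zero_smul, add_zero] at hsum
  rw [← inv_smul_smul₀ (mul_ne_zero h4 hΦ) (u * (u * (v * w))), ← hsum]
  refine Subalgebra.smul_mem _ (sub_mem (sub_mem (add_mem ?_ ?_) ?_) ?_) _ <;>
    refine hV.pow_four_mem_bot ?_
  · exact add_mem (add_mem hu hv) hw
  · exact sub_mem (sub_mem hu hv) hw
  · exact add_mem (sub_mem hu hv) hw
  · exact sub_mem (add_mem hu hv) hw

end IsKummer

end Kummer

theorem ZMod.two_mul_eq_two_of_ne_zero_of_ne_two {t : ZMod 4} (h₀ : t ≠ 0) (h₂ : t ≠ 2) :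
    2 * t = 2 := by
  revert t; decide

theorem ZMod.eq_one_or_eq_three_of_two_mul_eq_two {t : ZMod 4} (h : 2 * t = 2) :
    t = 1 ∨ t = 3 := by
  revert t; decide

section KummerExponents

variable {V : Type*} [AddCommGroup V] [Module (ZMod 4) V]

/-- The relations that `TensorCyclicPres.kummerExponents` derives for the exponent vectors of
monomials spanning a Kummer space. -/
structure KummerExponents (ω : LinearMap.BilinForm (ZMod 4) V) (S : Set V) : Prop where
  eq_of_apply_eq_zero : ∀ ⦃e f⦄, e ∈ S → f ∈ S → ω e f = 0 → e = f
  two_smul_add_two_smul_eq_zero : ∀ ⦃e f⦄, e ∈ S → f ∈ S → ω e f = 2 → 2 • e + 2 • f = 0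
  two_smul_add_add_eq_zero : ∀ ⦃e a b⦄, e ∈ S → a ∈ S → b ∈ S → ω e a = 1 → ω e b = 3 →
    (ω a b = 1 ∨ ω a b = 2) → 2 • e + a + b = 0

namespace KummerExponents

variable {ω : LinearMap.BilinForm (ZMod 4) V} {S : Set V} {e a b : V}

theorem apply_ne_zero (hS : KummerExponents ω S) (he : e ∈ S) (ha : a ∈ S) (hne : e ≠ a) :
    ω e a ≠ 0 :=
  fun h => hne (hS.eq_of_apply_eq_zero he ha h)

theorem apply_add_apply_eq (hS : KummerExponents ω S) (hω : ω.IsAlt) (he : e ∈ S) (ha : a ∈ S)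
    (hb : b ∈ S) (hab : ω a b = 1) (hea : ω e a = 1) (heb : ω e b = 3) (c : V) :
    ω c a + ω c b = 2 * ω e c := by
  have h := congrArg (ω c) (hS.two_smul_add_add_eq_zero he ha hb hea heb (Or.inl hab))
  rw [map_add, map_add, map_nsmul, map_zero, ← hω.neg_eq e c, nsmul_eq_mul] at h
  push_cast at h
  linear_combination h

theorem two_mul_apply_eq_two (hS : KummerExponents ω S) (hω : ω.IsAlt)
    (hω₂ : ∀ f g : V, 2 • f = 0 → 2 • g = 0 → ω f g = 0) (he : e ∈ S) (ha : a ∈ S) (hb : b ∈ S)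
    (hea : e ≠ a) (heb : e ≠ b) (hab₂ : 2 • a = 2 • b) (hab : ω a b = 2) : 2 * ω e a = 2 := by
  refine ZMod.two_mul_eq_two_of_ne_zero_of_ne_two (hS.apply_ne_zero he ha hea) fun hea₂ =>
    hS.apply_ne_zero he hb heb ?_
  have h := hω₂ (e - a) (b - a) ?_ (by rw [smul_sub, hab₂, sub_self])
  · rw [map_sub, map_sub, LinearMap.sub_apply, LinearMap.sub_apply, hω.self_eq_zero, hea₂,
      hab] at h
    calc ω e b = 2 + 2 := by linear_combination h
      _ = 0 := rfl
  · rw [show 2 • (e - a) = (2 • e + 2 • a) - 4 • a by abel,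
      hS.two_smul_add_two_smul_eq_zero he ha hea₂, ZModModule.char_nsmul_eq_zero, sub_zero]

theorem apply_eq_one_or_apply_eq_one (hS : KummerExponents ω S) (hω : ω.IsAlt)
    (hω₂ : ∀ f g : V, 2 • f = 0 → 2 • g = 0 → ω f g = 0) {e₁ e₂ e₃ e₄ : V} (he : e ∈ S)
    (he₁ : e₁ ∈ S) (he₂ : e₂ ∈ S) (he₃ : e₃ ∈ S) (he₄ : e₄ ∈ S) (hne₁ : e ≠ e₁) (hne₂ : e ≠ e₂)
    (hne₃ : e ≠ e₃) (hne₄ : e ≠ e₄) (h₁₂ : ω e₁ e₂ = 1) (h₁₃ : ω e₁ e₃ = 1) (h₂₄ : ω e₂ e₄ = 1)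
    (h₃₄ : ω e₃ e₄ = 1) (h₁₄ : ω e₁ e₄ = 2) (h₂₃ : ω e₂ e₃ = 2) :
    (ω e e₁ = 1 ∧ ω e e₂ = 1 ∧ ω e e₃ = 1 ∧ ω e e₄ = 1) ∨
      (ω e₁ e = 1 ∧ ω e₂ e = 1 ∧ ω e₃ e = 1 ∧ ω e₄ e = 1) := by
  have anti (a b : V) : ω b a = -ω a b := (hω.neg_eq a b).symm
  have four : (4 : ZMod 4) = 0 := by decide
  have r₂ : 2 • e₂ + e₄ + e₁ = 0 := hS.two_smul_add_add_eq_zero he₂ he₄ he₁ h₂₄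
    (by rw [anti, h₁₂]; decide) (Or.inr (by rw [anti, h₁₄]; decide))
  have r₃ : 2 • e₃ + e₄ + e₁ = 0 := hS.two_smul_add_add_eq_zero he₃ he₄ he₁ h₃₄
    (by rw [anti, h₁₃]; decide) (Or.inr (by rw [anti, h₁₄]; decide))
  have s₂ : 2 * ω e e₂ + ω e e₄ + ω e e₁ = 0 := by
    simpa [nsmul_eq_mul] using congrArg (ω e) r₂
  have s₃ : 2 * ω e e₃ + ω e e₄ + ω e e₁ = 0 := by
    simpa [nsmul_eq_mul] using congrArg (ω e) r₃
  have odd₂ : 2 * ω e e₂ = 2 := hS.two_mul_apply_eq_two hω hω₂ he he₂ he₃ hne₂ hne₃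
    (by linear_combination (norm := abel) r₂ - r₃) h₂₃
  have odd₃ : 2 * ω e e₃ = 2 := by linear_combination s₃ - s₂ + odd₂
  have odd₁ : 2 * ω e e₁ = 2 :=
    ZMod.two_mul_eq_two_of_ne_zero_of_ne_two (hS.apply_ne_zero he he₁ hne₁) fun h =>
      hS.apply_ne_zero he he₄ hne₄ (by linear_combination s₂ - odd₂ - h - four)
  have e₄_eq : ω e e₄ = ω e e₁ := by linear_combination s₂ - odd₂ - odd₁ - four
  have no_jump {a b c : V} (ha : a ∈ S) (hb : b ∈ S) (hab : ω a b = 1) (hc : 2 * ω e c = 2)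
      (hcab : ω c a + ω c b ≠ 2) (hea : ω e a = 1) : ω e b ≠ 3 := fun heb =>
    hcab (by rw [hS.apply_add_apply_eq hω he ha hb hab hea heb, hc])
  have c₂ := ZMod.eq_one_or_eq_three_of_two_mul_eq_two odd₂
  have c₃ := ZMod.eq_one_or_eq_three_of_two_mul_eq_two odd₃
  rcases ZMod.eq_one_or_eq_three_of_two_mul_eq_two odd₁ with h₁ | h₁
  · left
    refine ⟨h₁, c₂.resolve_right ?_, c₃.resolve_right ?_, e₄_eq ▸ h₁⟩
    · exact no_jump he₁ he₂ h₁₂ odd₃ (by rw [anti e₁, anti e₂, h₁₃, h₂₃]; decide) h₁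
    · exact no_jump he₁ he₃ h₁₃ odd₂ (by rw [anti e₁, h₁₂, h₂₃]; decide) h₁
  · have h₄ : ω e e₄ = 3 := e₄_eq ▸ h₁
    have h₂ : ω e e₂ = 3 := c₂.resolve_left fun h₂ =>
      no_jump he₂ he₄ h₂₄ odd₃ (by rw [anti e₂, h₂₃, h₃₄]; decide) h₂ h₄
    have h₃ : ω e e₃ = 3 := c₃.resolve_left fun h₃ =>
      no_jump he₃ he₄ h₃₄ odd₂ (by rw [h₂₃, h₂₄]; decide) h₃ h₄
    right
    refine ⟨?_, ?_, ?_, ?_⟩ <;> rw [anti] <;> simp only [h₁, h₂, h₃, h₄] <;> decide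

end KummerExponents

end KummerExponents

/-- `(a, b)` is the exponent vector of the monomial `∏ₖ (x k)^{aₖ} (y k)^{bₖ}`. -/
abbrev ExpVec (n : ℕ) := (Fin n → ZMod 4) × (Fin n → ZMod 4)

def symplecticForm (n : ℕ) : LinearMap.BilinForm (ZMod 4) (ExpVec n) :=
  LinearMap.mk₂ (ZMod 4) (fun e f => e.1 ⬝ᵥ f.2 - e.2 ⬝ᵥ f.1)
    (fun _ _ _ => by simp only [Prod.fst_add, Prod.snd_add, add_dotProduct]; ring)
    (fun _ _ _ => by simp only [Prod.smul_fst, Prod.smul_snd, smul_dotProduct, smul_eq_mul]; ring)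
    (fun _ _ _ => by simp only [Prod.fst_add, Prod.snd_add, dotProduct_add]; ring)
    (fun _ _ _ => by simp only [Prod.smul_fst, Prod.smul_snd, dotProduct_smul, smul_eq_mul]; ring)

namespace symplecticForm

variable {n : ℕ}

theorem apply (e f : ExpVec n) : symplecticForm n e f = e.1 ⬝ᵥ f.2 - e.2 ⬝ᵥ f.1 := rfl

theorem isAlt : (symplecticForm n).IsAlt := fun e => by
  rw [apply, dotProduct_comm, sub_self]

theorem apply_swap (e f : ExpVec n) : symplecticForm n f e = -symplecticForm n e f :=
  (isAlt.neg_eq e f).symm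

theorem eq_zero_of_two_smul_eq_zero (e f : ExpVec n) (he : 2 • e = 0) (hf : 2 • f = 0) :
    symplecticForm n e f = 0 := by
  have key : ∀ a b : ZMod 4, 2 • a = 0 → 2 • b = 0 → a * b = 0 := by decide
  have hdot {u v : Fin n → ZMod 4} (hu : 2 • u = 0) (hv : 2 • v = 0) : u ⬝ᵥ v = 0 :=
    Finset.sum_eq_zero fun k _ => key _ _ (congrFun hu k) (congrFun hv k)
  rw [apply, hdot (congrArg Prod.fst he) (congrArg Prod.snd hf),
    hdot (congrArg Prod.snd he) (congrArg Prod.fst hf), sub_zero]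

theorem eq_zero_of_forall_apply_eq_zero {f : ExpVec n} (h : ∀ g, symplecticForm n g f = 0) :
    f = 0 := by
  refine Prod.ext (funext fun k => ?_) (funext fun k => ?_)
  · simpa [apply] using h (0, Pi.single k 1)
  · simpa [apply] using h (Pi.single k 1, 0)

end symplecticForm

namespace TensorCyclicPres

section Ring

variable {F A : Type*} [Field F] [Ring A] [Algebra F A] {i : F} {n : ℕ}
  (P : TensorCyclicPres F A i n)

def block (e : ExpVec n) (k : Fin n) : A := P.x k ^ (e.1 k).val * P.y k ^ (e.2 k).val

def mono (e : ExpVec n) : A := ((List.finRange n).map (P.block e)).prod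

-- `ZMod 4` is definitionally `Fin 4`, so the exponents of `IsMonomial` already form an `ExpVec`.
theorem IsMonomial.exists_eq_mono {P : TensorCyclicPres F A i n} {v : A} (hv : P.IsMonomial v) :
    ∃ e, v = P.mono e :=
  let ⟨a, b, hv⟩ := hv
  ⟨(a, b), hv⟩

theorem commute_block_of_ne (e f : ExpVec n) {k l : Fin n} (hkl : k ≠ l) :
    Commute (P.block e k) (P.block f l) := by
  have hxx := (P.xx_comm k l hkl).pow_pow (e.1 k).val (f.1 l).val
  have hxy := (P.xy_comm k l hkl).pow_pow (e.1 k).val (f.2 l).val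
  have hyx := (P.xy_comm l k hkl.symm).symm.pow_pow (e.2 k).val (f.1 l).val
  have hyy := (P.yy_comm k l hkl).pow_pow (e.2 k).val (f.2 l).val
  exact (hxx.mul_right hxy).mul_left (hyx.mul_right hyy)

variable (hi : i ^ 4 = 1)
include hi

theorem qCommute_block (e f : ExpVec n) (k : Fin n) :
    QCommute i (e.1 k * f.2 k - e.2 k * f.1 k) (P.block e k) (P.block f k) := by
  have hxy : QCommute i 1 (P.x k) (P.y k) := QCommute.one_iff.2 (P.xy_rel k)
  have hyx := hxy.symm hi
  have h := ((QCommute.of_commute ((Commute.refl (P.x k)).pow_pow _ _)).mul_right hi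
      ((hxy.pow_right hi (f.2 k).val).pow_left hi (e.1 k).val)).mul_left hi
    (((hyx.pow_right hi (f.1 k).val).pow_left hi (e.2 k).val).mul_right hi
      (QCommute.of_commute ((Commute.refl (P.y k)).pow_pow _ _)))
  rw [block, block]
  convert h using 1
  simp only [ZMod.natCast_val, ZMod.cast_id', id]
  ring

theorem qCommute_mono (e f : ExpVec n) :
    QCommute i (symplecticForm n e f) (P.mono e) (P.mono f) := by
  have hcol (l : Fin n) :
      QCommute i (e.1 l * f.2 l - e.2 l * f.1 l) (P.mono e) (P.block f l) := by
    have h := QCommute.list_prod_left hi (L := List.finRange n) (f := P.block e)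
      (t := fun k => if k = l then e.1 l * f.2 l - e.2 l * f.1 l else 0) fun k _ => by
        split_ifs with hkl
        · subst hkl
          exact P.qCommute_block hi e f k
        · exact QCommute.of_commute (P.commute_block_of_ne e f hkl)
    rwa [← Fin.sum_univ_def, Finset.sum_ite_eq' Finset.univ l, if_pos (Finset.mem_univ l)] at h
  have h := QCommute.list_prod_right hi fun l (_ : l ∈ List.finRange n) => hcol l
  rwa [← Fin.sum_univ_def, Finset.sum_sub_distrib] at h

end Ring

section Domain

variable {F A : Type*} [Field F] [Ring A] [IsDomain A] [Algebra F A] {i : F} {n : ℕ}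
  (P : TensorCyclicPres F A i n)

theorem x_ne_zero (k : Fin n) : P.x k ≠ 0 := fun h => P.α_ne_zero k <| by
  simpa [h] using (P.x_pow k).symm

theorem y_ne_zero (k : Fin n) : P.y k ≠ 0 := fun h => P.β_ne_zero k <| by
  simpa [h] using (P.y_pow k).symm

theorem mono_ne_zero (e : ExpVec n) : P.mono e ≠ 0 := List.prod_ne_zero fun h => by
  obtain ⟨k, -, hk⟩ := List.mem_map.1 h
  exact mul_ne_zero (pow_ne_zero _ (P.x_ne_zero k)) (pow_ne_zero _ (P.y_ne_zero k)) hk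

theorem qCommute_mono_iff (hi : IsPrimitiveRoot i 4) {e f : ExpVec n} {t : ZMod 4} :
    QCommute i t (P.mono e) (P.mono f) ↔ symplecticForm n e f = t :=
  ⟨fun h => (P.qCommute_mono hi.pow_eq_one e f).eq_of_qCommute hi h
    (mul_ne_zero (P.mono_ne_zero f) (P.mono_ne_zero e)),
   fun h => h ▸ P.qCommute_mono hi.pow_eq_one e f⟩

theorem mono_mul_mono (hi : IsPrimitiveRoot i 4) {e f : ExpVec n} {t : ZMod 4} {c : F}
    (h : symplecticForm n e f = t) (hc : i ^ t.val = c) :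
    P.mono e * P.mono f = c • (P.mono f * P.mono e) :=
  hc ▸ (P.qCommute_mono_iff hi).2 h

theorem sum_eq_zero_of_prod_mem_bot (hi : IsPrimitiveRoot i 4) (L : List (ExpVec n))
    (h : (L.map P.mono).prod ∈ (⊥ : Subalgebra F A)) : L.sum = 0 := by
  refine symplecticForm.eq_zero_of_forall_apply_eq_zero fun g => ?_
  have hg := QCommute.list_prod_right hi.pow_eq_one fun f (_ : f ∈ L) =>
    P.qCommute_mono hi.pow_eq_one g f
  rw [← map_list_sum] at hg
  refine hg.eq_zero_of_mem_bot hi h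
    (mul_ne_zero (List.prod_ne_zero fun h0 => ?_) (P.mono_ne_zero g))
  obtain ⟨f, -, hf⟩ := List.mem_map.1 h0
  exact P.mono_ne_zero f hf

variable [NeZero (2 : F)] (hi : i ^ 2 = -1) {V : Submodule F A} (hV : IsKummer V)
include hi hV

theorem eq_of_symplecticForm_eq_zero {e f : ExpVec n} (he : P.mono e ∈ V) (hf : P.mono f ∈ V)
    (h : symplecticForm n e f = 0) : e = f := by
  have hprim := isPrimitiveRoot_four_of_sq_eq_neg_one hi
  have hsum := P.sum_eq_zero_of_prod_mem_bot hprim [e, e, e, f] <| by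
    simpa [pow_succ, mul_assoc] using
      hV.pow_three_mul_mem_bot hi he hf ((P.qCommute_mono_iff hprim).2 h).commute
  rw [← sub_eq_zero, show e - f = 4 • e - [e, e, e, f].sum by
    simp only [List.sum_cons, List.sum_nil]; abel, hsum, ZModModule.char_nsmul_eq_zero, sub_zero]

theorem two_smul_add_two_smul_eq_zero {e f : ExpVec n} (he : P.mono e ∈ V) (hf : P.mono f ∈ V)
    (h : symplecticForm n e f = 2) : 2 • e + 2 • f = 0 := by
  have hprim := isPrimitiveRoot_four_of_sq_eq_neg_one hi
  have hfe : P.mono f * P.mono e = -(P.mono e * P.mono f) := by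
    rw [P.mono_mul_mono hprim h hi, neg_one_smul, neg_neg]
  have hsum := P.sum_eq_zero_of_prod_mem_bot hprim [e, e, f, f] <| by
    simpa [pow_succ, mul_assoc] using hV.sq_mul_sq_mem_bot he hf hfe
  rw [← hsum]; simp only [List.sum_cons, List.sum_nil]; abel

theorem two_smul_add_add_eq_zero {e a b : ExpVec n} (he : P.mono e ∈ V) (ha : P.mono a ∈ V)
    (hb : P.mono b ∈ V) (hea : symplecticForm n e a = 1) (heb : symplecticForm n e b = 3)
    (hab : symplecticForm n a b = 1 ∨ symplecticForm n a b = 2) : 2 • e + a + b = 0 := by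
  have hprim := isPrimitiveRoot_four_of_sq_eq_neg_one hi
  have h4 : (4 : F) ≠ 0 := by
    rw [show (4 : F) = 2 * 2 by norm_num]; exact mul_ne_zero two_ne_zero two_ne_zero
  have val_neg_one : i ^ (-1 : ZMod 4).val = -i := by
    rw [show (-1 : ZMod 4).val = 3 from rfl]; linear_combination i * hi
  have swap {f g : ExpVec n} {t : ZMod 4} (h : symplecticForm n f g = t) :
      symplecticForm n g f = -t := by rw [symplecticForm.apply_swap, h]
  have hx := P.mono_mul_mono hprim (swap hea) val_neg_one
  have hy := P.mono_mul_mono hprim (swap heb) (show i ^ (-3 : ZMod 4).val = i from pow_one i)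
  have hmem : P.mono e * (P.mono e * (P.mono a * P.mono b)) ∈ (⊥ : Subalgebra F A) := by
    rcases hab with hab | hab
    · refine hV.mul_mul_mul_mem_bot he ha hb hx hy (P.mono_mul_mono hprim (swap hab) val_neg_one)
        (by linear_combination (1 - i) * hi) (ne_of_eq_of_ne (b := 4 * (1 - i))
          (by linear_combination (-i ^ 3 + 2 * i ^ 2 + 2 * i - 3) * hi)
          (mul_ne_zero h4 (sub_ne_zero.2 (hprim.ne_one (by norm_num)).symm)))
    · exact hV.mul_mul_mul_mem_bot he ha hb hx hy (P.mono_mul_mono hprim (swap hab) hi) (by ring)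
        (ne_of_eq_of_ne (b := -4 * i) (by linear_combination 2 * i * hi)
          (mul_ne_zero (neg_ne_zero.2 h4) (hprim.ne_zero (by norm_num))))
  have hsum := P.sum_eq_zero_of_prod_mem_bot hprim [e, e, a, b] (by simpa using hmem)
  rw [← hsum]; simp only [List.sum_cons, List.sum_nil]; abel

theorem kummerExponents : KummerExponents (symplecticForm n) {e | P.mono e ∈ V} :=
  ⟨fun _ _ => P.eq_of_symplecticForm_eq_zero hi hV,
    fun _ _ => P.two_smul_add_two_smul_eq_zero hi hV,
    fun _ _ _ => P.two_smul_add_add_eq_zero hi hV⟩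

end Domain

end TensorCyclicPres

theorem statement11_general {F A : Type*} [Field F] [CharZero F] [DivisionRing A] [Algebra F A]
    (i : F) (hi : i ^ 2 = -1) (n : ℕ)
    (P : TensorCyclicPres F A i n)
    (v₁ v₂ v₃ v₄ w : A)
    (h₁ : P.IsMonomial v₁) (h₂ : P.IsMonomial v₂) (h₃ : P.IsMonomial v₃)
    (h₄ : P.IsMonomial v₄) (hw : P.IsMonomial w)
    (hdist : List.Pairwise (· ≠ ·) [v₁, v₂, v₃, v₄, w])
    (hK : ∀ u ∈ Submodule.span F ({v₁, v₂, v₃, v₄, w} : Set A),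
      u ^ 4 ∈ Set.range (algebraMap F A))
    (h12 : v₁ * v₂ = i • (v₂ * v₁)) (h13 : v₁ * v₃ = i • (v₃ * v₁))
    (h24 : v₂ * v₄ = i • (v₄ * v₂)) (h34 : v₃ * v₄ = i • (v₄ * v₃))
    (h14 : v₁ * v₄ = -(v₄ * v₁)) (h23 : v₂ * v₃ = -(v₃ * v₂)) :
    (w * v₁ = i • (v₁ * w) ∧ w * v₂ = i • (v₂ * w) ∧
      w * v₃ = i • (v₃ * w) ∧ w * v₄ = i • (v₄ * w)) ∨
    (v₁ * w = i • (w * v₁) ∧ v₂ * w = i • (w * v₂) ∧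
      v₃ * w = i • (w * v₃) ∧ v₄ * w = i • (w * v₄)) := by
  obtain ⟨e₁, rfl⟩ := h₁.exists_eq_mono
  obtain ⟨e₂, rfl⟩ := h₂.exists_eq_mono
  obtain ⟨e₃, rfl⟩ := h₃.exists_eq_mono
  obtain ⟨e₄, rfl⟩ := h₄.exists_eq_mono
  obtain ⟨e, rfl⟩ := hw.exists_eq_mono
  have hprim := isPrimitiveRoot_four_of_sq_eq_neg_one hi
  simp only [← QCommute.one_iff, ← QCommute.two_iff hi, P.qCommute_mono_iff hprim]
    at h12 h13 h24 h34 h14 h23 ⊢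
  have hne {f : ExpVec n} (hf : P.mono f ∈ [P.mono e₁, P.mono e₂, P.mono e₃, P.mono e₄]) :
      e ≠ f := fun h =>
    (List.pairwise_append.1 hdist).2.2 _ hf _ (List.mem_singleton_self _) (by rw [h])
  have hmem {f : ExpVec n} (hf : P.mono f ∈ ({P.mono e₁, P.mono e₂, P.mono e₃, P.mono e₄,
      P.mono e} : Set A)) : P.mono f ∈ Submodule.span F _ := Submodule.subset_span hf
  exact (P.kummerExponents hi hK).apply_eq_one_or_apply_eq_one symplecticForm.isAlt
    symplecticForm.eq_zero_of_two_smul_eq_zero (hmem (by simp)) (hmem (by simp))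
    (hmem (by simp)) (hmem (by simp)) (hmem (by simp)) (hne (by simp)) (hne (by simp))
    (hne (by simp)) (hne (by simp)) h12 h13 h24 h34 h14 h23

/-- If five distinct monomials `v₁, v₂, v₃, v₄, w` span a Kummer space with
`v₁v₂ = i·v₂v₁`, `v₁v₃ = i·v₃v₁`, `v₂v₄ = i·v₄v₂`, `v₃v₄ = i·v₄v₃`,
`v₁v₄ = -v₄v₁`, and `v₂v₃ = -v₃v₂`, then either `w vₖ = i·vₖ w` for all `k`, or
`vₖ w = i·w vₖ` for all `k`. -/
theorem statement11 {F A : Type*} [Field F] [CharZero F] [DivisionRing A] [Algebra F A]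
    (i : F) (hi : i ^ 2 = -1) (n : ℕ) (hn : 1 ≤ n)
    (P : TensorCyclicPres F A i n) (hdim : Module.finrank F A = 16 ^ n)
    (v₁ v₂ v₃ v₄ w : A)
    (h₁ : P.IsMonomial v₁) (h₂ : P.IsMonomial v₂) (h₃ : P.IsMonomial v₃)
    (h₄ : P.IsMonomial v₄) (hw : P.IsMonomial w)
    (hdist : List.Pairwise (· ≠ ·) [v₁, v₂, v₃, v₄, w])
    (hK : ∀ u ∈ Submodule.span F ({v₁, v₂, v₃, v₄, w} : Set A),
      u ^ 4 ∈ Set.range (algebraMap F A))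
    (h12 : v₁ * v₂ = i • (v₂ * v₁)) (h13 : v₁ * v₃ = i • (v₃ * v₁))
    (h24 : v₂ * v₄ = i • (v₄ * v₂)) (h34 : v₃ * v₄ = i • (v₄ * v₃))
    (h14 : v₁ * v₄ = -(v₄ * v₁)) (h23 : v₂ * v₃ = -(v₃ * v₂)) :
    (w * v₁ = i • (v₁ * w) ∧ w * v₂ = i • (v₂ * w) ∧
      w * v₃ = i • (v₃ * w) ∧ w * v₄ = i • (v₄ * w)) ∨
    (v₁ * w = i • (w * v₁) ∧ v₂ * w = i • (w * v₂) ∧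
      v₃ * w = i • (w * v₃) ∧ v₄ * w = i • (w * v₄)) :=
  statement11_general i hi n P v₁ v₂ v₃ v₄ w h₁ h₂ h₃ h₄ hw hdist hK h12 h13 h24 h34 h14 h23
end

section
/- Let n ≥ 1 and suppose dim_F A = 16^n. Then there do not exist nonzero elements v₁, …, v_{2n+1}, w ∈ A with v_k⁴ ∈ F·1 for all k and w⁴ ∈ F·1, satisfying v_k·v_j = i·v_j·v_k for all 1 ≤ k < j ≤ 2n+1, together with an odd integer r, 1 ≤ r ≤ 2n+1, such that v_k·w = i·w·v_k for k < r, v_r·w = −w·v_r, and w·v_k = i·v_k·w for k > r. (The F-subalgebra such elements would generate contains a tensor product of n cyclic algebras of degree 4 and a quaternion algebra, which is too large.) -/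
section Aux

variable {F A : Type*} [Field F] [DivisionRing A] [Algebra F A]

/-- ordered monomial v 1 ^ a 1 * ... * v m ^ a m -/
noncomputable def mono14 (v : ℕ → A) (a : ℕ → ℕ) : ℕ → A
  | 0 => 1
  | j + 1 => mono14 v a j * v (j + 1) ^ a (j + 1)

lemma mono14_ne_zero (v : ℕ → A) (a : ℕ → ℕ) :
    ∀ m, (∀ k, 1 ≤ k → k ≤ m → v k ≠ 0) → mono14 v a m ≠ 0 := by
  intro m
  induction m with
  | zero => intro _; simp [mono14]
  | succ j ih =>
    intro h
    exact mul_ne_zero (ih fun k hk hkm => h k hk (by omega))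
      (pow_ne_zero _ (h (j+1) (by omega) le_rfl))

lemma pow_comm14 (c : F) (x y : A) (h : x * y = c • (y * x)) :
    ∀ s : ℕ, x * y ^ s = c ^ s • (y ^ s * x) := by
  intro s
  induction s with
  | zero => simp
  | succ s ih =>
    rw [pow_succ, ← mul_assoc, ih, smul_mul_assoc, mul_assoc, h, mul_smul_comm,
      smul_smul, ← pow_succ, ← mul_assoc]

lemma mono14_comm (i : F) (v : ℕ → A) (a t : ℕ → ℕ) (u : A) :
    ∀ m : ℕ, (∀ k, 1 ≤ k → k ≤ m → u * v k = (i ^ t k) • (v k * u)) →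
    u * mono14 v a m = (i ^ (∑ k ∈ Finset.Icc 1 m, t k * a k)) • (mono14 v a m * u) := by
  intro m
  induction m with
  | zero => simp [mono14]
  | succ j ih =>
    intro h
    have ihj := ih fun k hk hkm => h k hk (by omega)
    have hpow := pow_comm14 (i ^ t (j+1)) u (v (j+1)) (h (j+1) (by omega) le_rfl) (a (j+1))
    show u * (mono14 v a j * v (j+1) ^ a (j+1)) = _ • (mono14 v a j * v (j+1) ^ a (j+1) * u)
    rw [← mul_assoc, ihj, smul_mul_assoc, mul_assoc, hpow, mul_smul_comm, smul_smul,
      ← pow_mul, ← pow_add, ← mul_assoc,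
      Finset.sum_Icc_succ_top (by omega : 1 ≤ j + 1)]

/-- joint eigenvectors with distinct characters are independent -/
lemma indep14 {ι : Type*} (x : ι → A) (lam : ι → ℕ → F)
    (hx : ∀ α, x α ≠ 0)
    (step : ∀ (k : ℕ) (s : Finset ι) (c : ι → F), (∑ α ∈ s, c α • x α) = 0 →
       (∑ α ∈ s, (c α * lam α k) • x α) = 0)
    (sep : ∀ α β : ι, α ≠ β → ∃ k, lam α k ≠ lam β k) :
    LinearIndependent F x := by
  classical
  rw [linearIndependent_iff']
  intro s
  induction s using Finset.strongInduction with
  | _ s ih =>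
    intro c hc α hα
    have hβ0 : ∀ β ∈ s, β ≠ α → c β = 0 := by
      intro β hβ hβα
      obtain ⟨k, hk⟩ := sep β α hβα
      have h1 := step k s c hc
      have h2 : ∑ γ ∈ s, (c γ * (lam γ k - lam α k)) • x γ = 0 := by
        have : ∀ γ ∈ s, (c γ * (lam γ k - lam α k)) • x γ
            = (c γ * lam γ k) • x γ - lam α k • (c γ • x γ) := by
          intro γ _
          rw [smul_smul, mul_sub, sub_smul, mul_comm (lam α k)]
        rw [Finset.sum_congr rfl this, Finset.sum_sub_distrib, h1, ← Finset.smul_sum, hc,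
          smul_zero, sub_zero]
      have h3 : ∑ γ ∈ s.erase α, (c γ * (lam γ k - lam α k)) • x γ = 0 := by
        rw [Finset.sum_erase_eq_sub hα, h2]
        simp
      have h4 := ih (s.erase α) (Finset.erase_ssubset hα) _ h3 β
        (Finset.mem_erase.mpr ⟨hβα, hβ⟩)
      rcases mul_eq_zero.mp h4 with h | h
      · exact h
      · exact absurd (sub_eq_zero.mp h) hk
    have h5 : ∑ β ∈ s, c β • x β = c α • x α :=
      Finset.sum_eq_single_of_mem α hα fun β hβ hne => by rw [hβ0 β hβ hne, zero_smul]
    rw [h5] at hc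
    rcases smul_eq_zero.mp hc with h | h
    · exact h
    · exact absurd h (hx α)

lemma step14 {ι : Type*} (x : ι → A) (u : A) (hu : u ≠ 0) (lamk : ι → F)
    (hco : ∀ α, u * x α = lamk α • (x α * u))
    (s : Finset ι) (c : ι → F) (h : ∑ α ∈ s, c α • x α = 0) :
    ∑ α ∈ s, (c α * lamk α) • x α = 0 := by
  have h2 : (∑ α ∈ s, (c α * lamk α) • x α) * u = 0 := by
    rw [Finset.sum_mul]
    have : ∀ α ∈ s, (c α * lamk α) • x α * u = c α • (u * x α) := by
      intro α _
      rw [hco α, smul_smul, smul_mul_assoc]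
    rw [Finset.sum_congr rfl this]
    have : ∀ α ∈ s, c α • (u * x α) = u * (c α • x α) := fun α _ => (mul_smul_comm _ _ _).symm
    rw [Finset.sum_congr rfl this, ← Finset.mul_sum, h, mul_zero]
  rcases mul_eq_zero.mp h2 with h | h
  · exact h
  · exact absurd h hu

end Aux

/-- row functional for conjugation by `v j` -/
def rowV14 (m j : ℕ) (a : ℕ → ℕ) : ℕ :=
  ∑ k ∈ Finset.Icc 1 m, (if k < j then 3 else if k = j then 0 else 1) * a k

/-- row functional for conjugation by `w` -/
def rowW14 (m r : ℕ) (a : ℕ → ℕ) : ℕ :=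
  ∑ k ∈ Finset.Icc 1 m, (if k < r then 3 else if k = r then 2 else 1) * a k

lemma rows_inj (m r : ℕ) (hr1 : 1 ≤ r) (hrm : r ≤ m)
    (a b : ℕ → ℕ) (ha : ∀ k, a k ≤ 3) (hb : ∀ k, b k ≤ 3) (ha1 : a 1 ≤ 1) (hb1 : b 1 ≤ 1)
    (hV : ∀ j, 1 ≤ j → j ≤ m → rowV14 m j a ≡ rowV14 m j b [MOD 4])
    (hW : rowW14 m r a ≡ rowW14 m r b [MOD 4]) :
    ∀ k, 1 ≤ k → k ≤ m → a k = b k := by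
  set c : ℕ → ZMod 4 := fun k => (a k : ZMod 4) - b k with hcdef
  have hcast : ∀ (t x : ℕ → ℕ), ((∑ k ∈ Finset.Icc 1 m, t k * x k : ℕ) : ZMod 4)
      = ∑ k ∈ Finset.Icc 1 m, (t k : ZMod 4) * (x k : ZMod 4) := by
    intro t x; push_cast; rfl
  have hsub : ∀ t : ℕ → ℕ,
      (∑ k ∈ Finset.Icc 1 m, (t k : ℕ) * a k : ℕ) ≡ (∑ k ∈ Finset.Icc 1 m, (t k : ℕ) * b k : ℕ) [MOD 4] →
      ∑ k ∈ Finset.Icc 1 m, ((t k : ZMod 4)) * c k = 0 := by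
    intro t h
    have h1 : ((∑ k ∈ Finset.Icc 1 m, t k * a k : ℕ) : ZMod 4)
        = ((∑ k ∈ Finset.Icc 1 m, t k * b k : ℕ) : ZMod 4) :=
      (ZMod.natCast_eq_natCast_iff _ _ _).mpr h
    rw [hcast, hcast] at h1
    calc ∑ k ∈ Finset.Icc 1 m, (t k : ZMod 4) * c k
        = ∑ k ∈ Finset.Icc 1 m, ((t k : ZMod 4) * a k - (t k : ZMod 4) * b k) := by
          apply Finset.sum_congr rfl; intro k _; rw [hcdef]; ring
      _ = 0 := by rw [Finset.sum_sub_distrib, h1, sub_self]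
  have hVz : ∀ j, 1 ≤ j → j ≤ m →
      ∑ k ∈ Finset.Icc 1 m, ((if k < j then 3 else if k = j then 0 else 1 : ℕ) : ZMod 4) * c k = 0 :=
    fun j hj hjm => hsub _ (hV j hj hjm)
  have hWz : ∑ k ∈ Finset.Icc 1 m, ((if k < r then 3 else if k = r then 2 else 1 : ℕ) : ZMod 4) * c k = 0 :=
    hsub _ hW
  -- adjacent rows give c (j+1) = - c j
  have hadj : ∀ j, 1 ≤ j → j < m → c (j + 1) = - c j := by
    intro j hj hjm
    have e1 := hVz j hj (by omega)
    have e2 := hVz (j + 1) (by omega) (by omega)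
    have e3 : ∑ k ∈ Finset.Icc 1 m,
        (((if k < j then 3 else if k = j then 0 else 1 : ℕ) : ZMod 4)
          - ((if k < j + 1 then 3 else if k = j + 1 then 0 else 1 : ℕ) : ZMod 4)) * c k
        = 0 := by
      have : ∀ k ∈ Finset.Icc 1 m,
          (((if k < j then 3 else if k = j then 0 else 1 : ℕ) : ZMod 4)
            - ((if k < j + 1 then 3 else if k = j + 1 then 0 else 1 : ℕ) : ZMod 4)) * c k
          = ((if k < j then 3 else if k = j then 0 else 1 : ℕ) : ZMod 4) * c k
            - ((if k < j + 1 then 3 else if k = j + 1 then 0 else 1 : ℕ) : ZMod 4) * c k := by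
        intro k _; ring
      rw [Finset.sum_congr rfl this, Finset.sum_sub_distrib, e1, e2, sub_self]
    have e4 : ∑ k ∈ Finset.Icc 1 m,
        (((if k < j then 3 else if k = j then 0 else 1 : ℕ) : ZMod 4)
          - ((if k < j + 1 then 3 else if k = j + 1 then 0 else 1 : ℕ) : ZMod 4)) * c k
        = ∑ k ∈ Finset.Icc 1 m,
          ((if k = j then c j else 0) + (if k = j + 1 then c (j + 1) else 0)) := by
      apply Finset.sum_congr rfl
      intro k _
      rcases Nat.lt_trichotomy k j with h | h | h
      · rw [if_pos h, if_pos (by omega), if_neg (by omega), if_neg (by omega)]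
        simp
      · subst h
        rw [if_neg (by omega), if_pos rfl, if_pos (by omega), if_pos rfl, if_neg (by omega)]
        have : (((0:ℕ) : ZMod 4) - ((3:ℕ) : ZMod 4)) = 1 := by decide
        rw [this, one_mul, add_zero]
      · rcases Nat.lt_or_ge k (j + 1 + 1) with h' | h'
        · have hk1 : k = j + 1 := by omega
          subst hk1
          rw [if_neg (by omega), if_neg (by omega), if_neg (by omega), if_pos rfl,
            if_neg (by omega), if_pos rfl]
          have : (((1:ℕ) : ZMod 4) - ((0:ℕ) : ZMod 4)) = 1 := by decide
          rw [this, one_mul, zero_add]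
        · rw [if_neg (by omega), if_neg (by omega), if_neg (by omega), if_neg (by omega),
            if_neg (by omega), if_neg (by omega)]
          simp
    rw [e4] at e3
    rw [Finset.sum_add_distrib, Finset.sum_ite_eq' (Finset.Icc 1 m) j,
      Finset.sum_ite_eq' (Finset.Icc 1 m) (j + 1),
      if_pos (by simp [Finset.mem_Icc]; omega), if_pos (by simp [Finset.mem_Icc]; omega)] at e3
    linear_combination e3
  -- w-row minus r-th v-row gives 2 * c r = 0
  have h2cr : 2 * c r = 0 := by
    have e1 := hVz r hr1 hrm
    have e3 : ∑ k ∈ Finset.Icc 1 m,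
        (((if k < r then 3 else if k = r then 2 else 1 : ℕ) : ZMod 4)
          - ((if k < r then 3 else if k = r then 0 else 1 : ℕ) : ZMod 4)) * c k = 0 := by
      have : ∀ k ∈ Finset.Icc 1 m,
          (((if k < r then 3 else if k = r then 2 else 1 : ℕ) : ZMod 4)
            - ((if k < r then 3 else if k = r then 0 else 1 : ℕ) : ZMod 4)) * c k
          = ((if k < r then 3 else if k = r then 2 else 1 : ℕ) : ZMod 4) * c k
            - ((if k < r then 3 else if k = r then 0 else 1 : ℕ) : ZMod 4) * c k := by
        intro k _; ring
      rw [Finset.sum_congr rfl this, Finset.sum_sub_distrib, e1, hWz, sub_self]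
    have e4 : ∑ k ∈ Finset.Icc 1 m,
        (((if k < r then 3 else if k = r then 2 else 1 : ℕ) : ZMod 4)
          - ((if k < r then 3 else if k = r then 0 else 1 : ℕ) : ZMod 4)) * c k
        = ∑ k ∈ Finset.Icc 1 m, (if k = r then 2 * c r else 0) := by
      apply Finset.sum_congr rfl
      intro k _
      rcases Nat.lt_trichotomy k r with h | h | h
      · rw [if_pos h, if_pos h, if_neg (by omega), sub_self, zero_mul]
      · subst h
        rw [if_neg (by omega), if_pos rfl, if_neg (by omega), if_pos rfl, if_pos rfl]
        have : (((2:ℕ) : ZMod 4) - ((0:ℕ) : ZMod 4)) = 2 := by decide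
        rw [this]
      · rw [if_neg (by omega), if_neg (by omega), if_neg (by omega), if_neg (by omega),
          if_neg (by omega), sub_self, zero_mul]
    rw [e4, Finset.sum_ite_eq' (Finset.Icc 1 m) r,
      if_pos (by simp [Finset.mem_Icc]; omega)] at e3
    exact e3
  -- propagate: 2 * c j = ± 2 * c 1
  have hprop : ∀ j, 1 ≤ j → j ≤ m → 2 * c j = 2 * c 1 ∨ 2 * c j = -(2 * c 1) := by
    intro j hj
    induction j, hj using Nat.le_induction with
    | base => intro _; left; rfl
    | succ j hj ih =>
      intro hjm
      have hstep := hadj j hj (by omega)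
      rcases ih (by omega) with h | h
      · right; linear_combination 2 * hstep - h
      · left; linear_combination 2 * hstep - h
  have h2c1 : 2 * c 1 = 0 := by
    rcases hprop r hr1 hrm with h | h
    · rw [← h]; exact h2cr
    · have h' := h2cr; rw [h] at h'; exact neg_eq_zero.mp h'
  have hc1 : c 1 = 0 := by
    have ha' : a 1 = 0 ∨ a 1 = 1 := by omega
    have hb' : b 1 = 0 ∨ b 1 = 1 := by omega
    rcases ha' with h | h <;> rcases hb' with h' | h' <;>
      simp only [hcdef, h, h'] at h2c1 ⊢ <;>
      revert h2c1 <;> decide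
  have hall : ∀ j, 1 ≤ j → j ≤ m → c j = 0 := by
    intro j hj
    induction j, hj using Nat.le_induction with
    | base => intro _; exact hc1
    | succ j hj ih =>
      intro hjm
      rw [hadj j hj (by omega), ih (by omega), neg_zero]
  intro k hk hkm
  have hck := hall k hk hkm
  have : (a k : ZMod 4) = (b k : ZMod 4) := by
    have : (a k : ZMod 4) - b k = 0 := hck
    linear_combination this
  have hmod := (ZMod.natCast_eq_natCast_iff' _ _ _).mp this
  have h1 := ha k
  have h2 := hb k
  omega

def expo14 (n : ℕ) (α : Fin 2 × (Fin (2 * n) → Fin 4)) (k : ℕ) : ℕ :=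
  if k = 1 then (α.1 : ℕ)
  else if h : k - 2 < 2 * n ∧ 2 ≤ k then (α.2 ⟨k - 2, h.1⟩ : ℕ) else 0

lemma expo14_le (n : ℕ) (α : Fin 2 × (Fin (2 * n) → Fin 4)) (k : ℕ) :
    expo14 n α k ≤ 3 := by
  unfold expo14
  split_ifs with h1 h2
  · exact le_trans (Nat.le_of_lt_succ (α.1).2) (by norm_num)
  · exact Nat.le_of_lt_succ (α.2 _).2
  · norm_num

lemma expo14_one (n : ℕ) (α : Fin 2 × (Fin (2 * n) → Fin 4)) :
    expo14 n α 1 = (α.1 : ℕ) := by simp [expo14]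

lemma expo14_one_le (n : ℕ) (α : Fin 2 × (Fin (2 * n) → Fin 4)) :
    expo14 n α 1 ≤ 1 := by rw [expo14_one]; exact Nat.le_of_lt_succ (α.1).2

lemma expo14_shift (n : ℕ) (α : Fin 2 × (Fin (2 * n) → Fin 4)) (j : Fin (2 * n)) :
    expo14 n α ((j : ℕ) + 2) = (α.2 j : ℕ) := by
  have h : ((j : ℕ) + 2) - 2 < 2 * n ∧ 2 ≤ (j : ℕ) + 2 := ⟨by simp, by omega⟩
  rw [expo14, if_neg (by omega), dif_pos h]
  congr 1


example : True := trivial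

/-- If `dim_F A = 16^n` (with `n ≥ 1`), there do not exist nonzero Kummer elements
`v₁, …, v_{2n+1}, w` (fourth powers in `F·1`) with `vₖ vⱼ = i · vⱼ vₖ` for `k < j`,
together with an odd `r`, `1 ≤ r ≤ 2n+1`, such that `vₖ w = i · w vₖ` for `k < r`,
`v_r w = -w v_r`, and `w vₖ = i · vₖ w` for `k > r`. -/
theorem statement14 {F A : Type*} [Field F] [CharZero F] [DivisionRing A] [Algebra F A]
    (i : F) (hi : i ^ 2 = -1) (n : ℕ) (hn : 1 ≤ n)
    (hdim : Module.finrank F A = 16 ^ n) :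
    ¬ ∃ (v : ℕ → A) (w : A) (r : ℕ),
      (∀ k, 1 ≤ k → k ≤ 2 * n + 1 → v k ≠ 0) ∧ w ≠ 0 ∧
      (∀ k, 1 ≤ k → k ≤ 2 * n + 1 → (v k) ^ 4 ∈ Set.range (algebraMap F A)) ∧
      w ^ 4 ∈ Set.range (algebraMap F A) ∧
      (∀ k j, 1 ≤ k → k < j → j ≤ 2 * n + 1 → v k * v j = i • (v j * v k)) ∧
      Odd r ∧ 1 ≤ r ∧ r ≤ 2 * n + 1 ∧
      (∀ k, 1 ≤ k → k < r → v k * w = i • (w * v k)) ∧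
      v r * w = -(w * v r) ∧
      (∀ k, r < k → k ≤ 2 * n + 1 → w * v k = i • (v k * w)) := by
  rintro ⟨v, w, r, hv0, hw0, -, -, hcm, -, hr1, hrm, hvw1, hvw2, hvw3⟩
  set m := 2 * n + 1 with hmdef
  -- facts about i
  have hi0 : i ≠ 0 := by
    intro h
    rw [h] at hi
    norm_num at hi
  have hi4 : i ^ 4 = 1 := by
    have h4 : i ^ 4 = (i ^ 2) ^ 2 := by ring
    rw [h4, hi]; ring
  set I : Fˣ := Units.mk0 i hi0 with hIdef
  have hIval : ∀ s : ℕ, ((I ^ s : Fˣ) : F) = i ^ s := by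
    intro s; rw [Units.val_pow_eq_pow_val]; rfl
  have hI4 : I ^ 4 = 1 := Units.ext (by rw [hIval, hi4]; rfl)
  have hI2 : I ^ 2 ≠ 1 := by
    intro h
    have h2 : i ^ 2 = 1 := by rw [← hIval, h]; rfl
    rw [hi] at h2
    have : (2 : F) = 0 := by linear_combination -h2
    exact two_ne_zero this
  have hordI : orderOf I = 4 := by
    have h := orderOf_eq_prime_pow (x := I) (p := 2) (n := 1) (by norm_num; exact hI2)
      (by norm_num; exact hI4)
    simpa using h
  have hiff : ∀ s t : ℕ, i ^ s = i ^ t ↔ s ≡ t [MOD 4] := by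
    intro s t
    rw [← hIval, ← hIval]
    rw [← hordI]
    constructor
    · intro h; exact pow_eq_pow_iff_modEq.mp (Units.ext h)
    · intro h; exact congrArg Units.val (pow_eq_pow_iff_modEq.mpr h)
  -- index type and monomials
  set xf : (Fin 2 × (Fin (2 * n) → Fin 4)) → A := fun α => mono14 v (expo14 n α) m with hxfdef
  have hx0 : ∀ α, xf α ≠ 0 := fun α => mono14_ne_zero v _ m fun k hk hkm => hv0 k hk hkm
  -- commutation of generators with monomials
  have hvv : ∀ j, 1 ≤ j → j ≤ m → ∀ k, 1 ≤ k → k ≤ m →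
      v j * v k = (i ^ (if k < j then 3 else if k = j then 0 else 1)) • (v k * v j) := by
    intro j hj hjm k hk hkm
    rcases Nat.lt_trichotomy k j with h | h | h
    · rw [if_pos h, hcm k j hk h hjm, smul_smul, ← pow_succ, hi4, one_smul]
    · subst h
      rw [if_neg (lt_irrefl _), if_pos rfl, pow_zero, one_smul]
    · rw [if_neg (by omega), if_neg (by omega), pow_one]
      exact hcm j k hj h hkm
  have hwv : ∀ k, 1 ≤ k → k ≤ m →
      w * v k = (i ^ (if k < r then 3 else if k = r then 2 else 1)) • (v k * w) := by
    intro k hk hkm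
    rcases Nat.lt_trichotomy k r with h | h | h
    · rw [if_pos h, hvw1 k hk h, smul_smul, ← pow_succ, hi4, one_smul]
    · subst h
      rw [if_neg (lt_irrefl _), if_pos rfl, hi, neg_one_smul, hvw2, neg_neg]
    · rw [if_neg (by omega), if_neg (by omega), pow_one]
      exact hvw3 k h hkm
  have hxv : ∀ j, 1 ≤ j → j ≤ m → ∀ α,
      v j * xf α = (i ^ rowV14 m j (expo14 n α)) • (xf α * v j) := by
    intro j hj hjm α
    exact mono14_comm i v (expo14 n α)
      (fun k => if k < j then 3 else if k = j then 0 else 1) (v j) m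
      (fun k hk hkm => hvv j hj hjm k hk hkm)
  have hxw : ∀ α, w * xf α = (i ^ rowW14 m r (expo14 n α)) • (xf α * w) := by
    intro α
    exact mono14_comm i v (expo14 n α)
      (fun k => if k < r then 3 else if k = r then 2 else 1) w m
      (fun k hk hkm => hwv k hk hkm)
  -- the characters
  set lam : (Fin 2 × (Fin (2 * n) → Fin 4)) → ℕ → F := fun α k =>
      if k = 0 then i ^ rowW14 m r (expo14 n α)
      else if k ≤ m then i ^ rowV14 m k (expo14 n α) else 1 with hlamdef
  have hli : LinearIndependent F xf := by
    apply indep14 xf lam hx0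
    · -- step
      intro k s c hrel
      rcases Nat.eq_zero_or_pos k with rfl | hk
      · have h := step14 xf w hw0 (fun α => i ^ rowW14 m r (expo14 n α)) hxw s c hrel
        simpa [hlamdef] using h
      · by_cases hkm : k ≤ m
        · have h := step14 xf (v k) (hv0 k hk hkm) (fun α => i ^ rowV14 m k (expo14 n α))
            (hxv k hk hkm) s c hrel
          have hlam : ∀ α, lam α k = i ^ rowV14 m k (expo14 n α) := by
            intro α; rw [hlamdef]; simp only []
            rw [if_neg (by omega), if_pos hkm]
          simpa [hlam] using h
        · have hlam : ∀ α, lam α k = 1 := by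
            intro α; rw [hlamdef]; simp only []
            rw [if_neg (by omega), if_neg hkm]
          simpa [hlam] using hrel
    · -- separation
      intro α β hne
      by_contra hcon
      push_neg at hcon
      apply hne
      have hV : ∀ j, 1 ≤ j → j ≤ m →
          rowV14 m j (expo14 n α) ≡ rowV14 m j (expo14 n β) [MOD 4] := by
        intro j hj hjm
        have h := hcon j
        rw [hlamdef] at h
        simp only [if_neg (by omega : ¬ j = 0), if_pos hjm] at h
        exact (hiff _ _).mp h
      have hW : rowW14 m r (expo14 n α) ≡ rowW14 m r (expo14 n β) [MOD 4] := by
        have h := hcon 0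
        rw [hlamdef] at h
        simp only [if_pos rfl] at h
        exact (hiff _ _).mp h
      have heq := rows_inj m r hr1 hrm (expo14 n α) (expo14 n β)
        (expo14_le n α) (expo14_le n β) (expo14_one_le n α) (expo14_one_le n β) hV hW
      have h1 : α.1 = β.1 := by
        have h := heq 1 le_rfl (by omega)
        rw [expo14_one, expo14_one] at h
        exact Fin.ext h
      have h2 : α.2 = β.2 := by
        funext j
        have hj2 : (j : ℕ) < 2 * n := j.2
        have h := heq ((j : ℕ) + 2) (by omega) (by omega)
        rw [expo14_shift, expo14_shift] at h
        exact Fin.ext h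
      exact Prod.ext h1 h2
  -- cardinality contradiction
  have hfin : FiniteDimensional F A :=
    FiniteDimensional.of_finrank_pos (by rw [hdim]; positivity)
  have hcard := hli.fintype_card_le_finrank
  rw [hdim] at hcard
  have hcardeq : Fintype.card (Fin 2 × (Fin (2 * n) → Fin 4)) = 2 * 4 ^ (2 * n) := by
    simp [Fintype.card_prod, Fintype.card_fun]
  rw [hcardeq] at hcard
  have h16 : (16 : ℕ) ^ n = 4 ^ (2 * n) := by
    rw [pow_mul]; norm_num
  rw [h16] at hcard
  have hp : 0 < 4 ^ (2 * n) := by positivity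
  omega
end

section
/- Let n ≥ 1 and suppose dim_F A = 16^n. Then there do not exist nonzero elements v₁, …, v_{2n+2} ∈ A with v_k⁴ ∈ F·1 for all k and v_k·v_j = i·v_j·v_k for all 1 ≤ k < j ≤ 2n+2. (Such elements would generate an F-subalgebra decomposing as a tensor product of n+1 cyclic algebras of degree 4, of dimension 16^{n+1} > 16^n.) -/
set_option linter.unusedSectionVars false
set_option maxHeartbeats 1000000

section Aux
variable {F : Type*} [Field F] [CharZero F]

lemma aux_i4 {i : F} (hi : i ^ 2 = -1) : i ^ 4 = 1 := by
  have h : i ^ 4 = (i ^ 2) ^ 2 := by ring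
  rw [h, hi]; ring

lemma aux_i_ne {i : F} (hi : i ^ 2 = -1) : i ≠ 0 := by
  intro h; rw [h] at hi; norm_num at hi

lemma aux_pow_ne_one {i : F} (hi : i ^ 2 = -1) :
    ∀ r, 1 ≤ r → r ≤ 3 → i ^ r ≠ 1 := by
  intro r h1 h3 h
  interval_cases r
  · rw [pow_one] at h; rw [h] at hi; norm_num at hi
  · rw [h] at hi; norm_num at hi
  · have h4 : i ^ 4 = i := by
      rw [show (4:ℕ) = 3 + 1 from rfl, pow_succ, h, one_mul]
    rw [aux_i4 hi] at h4
    rw [← h4] at hi; norm_num at hi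

lemma aux_ipow_mod {i : F} (hi : i ^ 2 = -1) (s : ℕ) : i ^ s = i ^ (s % 4) := by
  conv_lhs => rw [← Nat.div_add_mod s 4]
  rw [pow_add, pow_mul, aux_i4 hi, one_pow, one_mul]

lemma aux_ipow_inj {i : F} (hi : i ^ 2 = -1) {s t : ℕ} (h : i ^ s = i ^ t) :
    (s : ZMod 4) = (t : ZMod 4) := by
  rw [aux_ipow_mod hi s, aux_ipow_mod hi t] at h
  have key : ∀ p q : ℕ, p < q → q < 4 → i ^ p ≠ i ^ q := by
    intro p q hpq hq4 hpq'
    have h1 : i ^ q = i ^ p * i ^ (q - p) := by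
      rw [← pow_add]; congr 1; omega
    rw [h1] at hpq'
    have h2 : i ^ (q - p) = 1 := by
      have hp0 : i ^ p ≠ 0 := pow_ne_zero _ (aux_i_ne hi)
      field_simp at hpq'
      tauto
    exact aux_pow_ne_one hi (q - p) (by omega) (by omega) h2
  have hs : s % 4 < 4 := Nat.mod_lt _ (by norm_num)
  have ht : t % 4 < 4 := Nat.mod_lt _ (by norm_num)
  have : s % 4 = t % 4 := by
    rcases lt_trichotomy (s % 4) (t % 4) with hlt | he | hgt
    · exact absurd h (key _ _ hlt ht)
    · exact he
    · exact absurd h.symm (key _ _ hgt hs)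
  rwa [ZMod.natCast_eq_natCast_iff]


variable {A : Type*} [DivisionRing A] [Algebra F A]

lemma aux_main {m t : ℕ} (hm : m = 2 * t + 2) (i : F) (hi : i ^ 2 = -1)
    (u : Fin m → A) (hu0 : ∀ k, u k ≠ 0)
    (hcomm : ∀ k j : Fin m, k < j → u k * u j = i • (u j * u k)) :
    LinearIndependent F (fun a : Fin m → Fin 4 =>
      ((List.finRange m).map fun j => u j ^ (a j : ℕ)).prod) := by
  classical
  set e : Fin m → Fin m → ℕ :=
    fun k j => if k < j then 1 else if j < k then 3 else 0 with he
  -- base commutation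
  have hA1 : ∀ k j : Fin m, u k * u j = i ^ (e k j) • (u j * u k) := by
    intro k j
    rcases lt_trichotomy k j with h | h | h
    · rw [he]; simp only [if_pos h]
      rw [pow_one]; exact hcomm k j h
    · subst h; rw [he]; simp only [lt_irrefl, if_neg (lt_irrefl k)]
      simp
    · have hc := hcomm j k h
      rw [he]; simp only [if_neg (not_lt.mpr h.le), if_pos h]
      rw [hc, smul_smul, ← pow_succ]
      rw [aux_i4 hi, one_smul]
  -- powers
  have hA : ∀ (s : ℕ) (k j : Fin m), u k * u j ^ s = i ^ (e k j * s) • (u j ^ s * u k) := by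
    intro s
    induction s with
    | zero => intro k j; simp
    | succ p ih =>
      intro k j
      rw [pow_succ, ← mul_assoc, ih k j, smul_mul_assoc, mul_assoc, hA1 k j,
        mul_smul_comm, smul_smul, ← pow_add,
        show e k j * p + e k j = e k j * (p + 1) from by ring, ← mul_assoc]
  -- list products
  have hB : ∀ (L : List (Fin m)) (k : Fin m) (a : Fin m → Fin 4),
      u k * (L.map fun j => u j ^ (a j : ℕ)).prod =
        i ^ ((L.map fun j => e k j * (a j : ℕ)).sum) •
          ((L.map fun j => u j ^ (a j : ℕ)).prod * u k) := by
    intro L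
    induction L with
    | nil => intro k a; simp
    | cons j L ih =>
      intro k a
      simp only [List.map_cons, List.prod_cons, List.sum_cons]
      rw [← mul_assoc, hA ((a j : ℕ)) k j, smul_mul_assoc, mul_assoc, ih k a,
        mul_smul_comm, smul_smul, ← pow_add, mul_assoc]
  set w : (Fin m → Fin 4) → A :=
    fun a => ((List.finRange m).map fun j => u j ^ (a j : ℕ)).prod with hw
  set cc : Fin m → (Fin m → Fin 4) → ℕ :=
    fun k a => ((List.finRange m).map fun j => e k j * (a j : ℕ)).sum with hcc
  have hwB : ∀ (k : Fin m) (a), u k * w a = i ^ (cc k a) • (w a * u k) :=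
    fun k a => hB (List.finRange m) k a
  have hw0 : ∀ a, w a ≠ 0 := by
    intro a
    rw [hw]
    have : ∀ L : List (Fin m), (L.map fun j => u j ^ (a j : ℕ)).prod ≠ 0 := by
      intro L
      induction L with
      | nil => simp
      | cons j L ih =>
        simp only [List.map_cons, List.prod_cons]
        exact mul_ne_zero (pow_ne_zero _ (hu0 j)) ih
    exact this _
  -- character separation
  have hsep : ∀ a b : Fin m → Fin 4, a ≠ b →
      ∃ k : Fin m, ((cc k a : ZMod 4)) ≠ ((cc k b : ZMod 4)) := by
    intro a b hab
    by_contra hcon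
    push_neg at hcon
    apply hab
    -- move to ZMod 4 over range m
    set D : ℕ → ZMod 4 := fun j =>
      if h : j < m then (((a ⟨j, h⟩ : ℕ) : ZMod 4) - ((b ⟨j, h⟩ : ℕ) : ZMod 4)) else 0 with hD
    set E : ℕ → ℕ → ZMod 4 :=
      fun k j => if k < j then 1 else if j < k then 3 else 0 with hE
    have hccZ : ∀ (k : Fin m) (x : Fin m → Fin 4),
        ((cc k x : ZMod 4)) = ∑ j ∈ Finset.range m,
          E (k : ℕ) j * (if h : j < m then ((x ⟨j, h⟩ : ℕ) : ZMod 4) else 0) := by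
      intro k x
      rw [hcc]
      simp only
      rw [← Fin.sum_univ_def, Nat.cast_sum,
        ← Fin.sum_univ_eq_sum_range (fun j => E (k : ℕ) j *
          (if h : j < m then ((x ⟨j, h⟩ : ℕ) : ZMod 4) else 0)) m]
      apply Finset.sum_congr rfl
      intro j _
      simp only [dif_pos j.isLt, Fin.eta, Nat.cast_mul]
      congr 1
      simp only [he, hE, Fin.lt_def]
      split_ifs <;> norm_num
    have hG : ∀ k, k < m → (∑ j ∈ Finset.range m, E k j * D j) = 0 := by
      intro k hk
      have h1 := hcon ⟨k, hk⟩
      rw [hccZ, hccZ] at h1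
      have : ∀ j ∈ Finset.range m, E k j * D j =
          E k j * (if h : j < m then ((a ⟨j, h⟩ : ℕ) : ZMod 4) else 0) -
          E k j * (if h : j < m then ((b ⟨j, h⟩ : ℕ) : ZMod 4) else 0) := by
        intro j hj
        rw [Finset.mem_range] at hj
        rw [hD]; simp only [dif_pos hj]
        ring
      rw [Finset.sum_congr rfl this, Finset.sum_sub_distrib, h1, sub_self]
    -- step A : alternation
    have stepA : ∀ k, k + 1 < m → D (k + 1) = - D k := by
      intro k hk1
      have hk : k < m := by omega
      have h1 := hG k hk
      have h2 := hG (k + 1) hk1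
      have h3 : ∑ j ∈ Finset.range m, (E k j * D j - E (k + 1) j * D j) = 0 := by
        rw [Finset.sum_sub_distrib, h1, h2, sub_self]
      have h4 : ∀ j ∈ Finset.range m, E k j * D j - E (k + 1) j * D j =
          (if j = k then D j else 0) + (if j = k + 1 then D j else 0) := by
        intro j _
        simp only [hE]
        have h31 : (3 : ZMod 4) = -1 := by decide
        rcases (by omega : j < k ∨ j = k ∨ j = k + 1 ∨ k + 1 < j) with h | h | h | h
        · rw [if_neg (by omega), if_pos h, if_neg (by omega), if_pos (by omega),
            if_neg (by omega), if_neg (by omega)]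
          ring
        · subst h
          rw [if_neg (by omega), if_neg (by omega), if_neg (by omega), if_pos (by omega),
            if_pos rfl, if_neg (by omega)]
          rw [h31]; ring
        · subst h
          rw [if_pos (by omega), if_neg (by omega), if_neg (by omega),
            if_neg (by omega), if_pos rfl]
          ring
        · rw [if_pos (by omega), if_pos (by omega), if_neg (by omega), if_neg (by omega)]
          ring
      rw [Finset.sum_congr rfl h4, Finset.sum_add_distrib,
        Finset.sum_ite_eq' (Finset.range m) k D,
        Finset.sum_ite_eq' (Finset.range m) (k + 1) D,
        if_pos (Finset.mem_range.mpr hk), if_pos (Finset.mem_range.mpr hk1)] at h3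
      linear_combination h3
    have stepB : ∀ j, j < m → D j = (-1) ^ j * D 0 := by
      intro j
      induction j with
      | zero => intro _; simp
      | succ p ih =>
        intro hp1
        rw [stepA p hp1, ih (by omega), pow_succ]
        ring
    have stepC : ∑ j ∈ Finset.range m, D j = 0 := by
      have hsum : ∀ s : ℕ, ∑ j ∈ Finset.range (2 * s), ((-1 : ZMod 4)) ^ j = 0 := by
        intro s
        induction s with
        | zero => simp
        | succ p ih =>
          rw [show 2 * (p + 1) = 2 * p + 1 + 1 from by ring, Finset.sum_range_succ,
            Finset.sum_range_succ, ih, pow_succ, pow_mul]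
          norm_num
      rw [Finset.sum_congr rfl (fun j hj => stepB j (Finset.mem_range.mp hj)),
        ← Finset.sum_mul]
      rw [show m = 2 * (t + 1) from by omega, hsum, zero_mul]
    have hD0 : D 0 = 0 := by
      have h0 := hG 0 (by omega)
      have : ∀ j ∈ Finset.range m, E 0 j * D j = D j - (if j = 0 then D j else 0) := by
        intro j _
        simp only [hE]
        rcases Nat.eq_zero_or_pos j with h | h
        · subst h; simp
        · rw [if_pos h, if_neg (by omega), one_mul, sub_zero]
      rw [Finset.sum_congr rfl this, Finset.sum_sub_distrib, stepC,
        Finset.sum_ite_eq' (Finset.range m) 0 D, if_pos (Finset.mem_range.mpr (by omega))] at h0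
      linear_combination -h0
    have hDall : ∀ j, j < m → D j = 0 := by
      intro j hj; rw [stepB j hj, hD0, mul_zero]
    funext j
    have hj := hDall j j.isLt
    rw [hD] at hj
    simp only [dif_pos j.isLt, Fin.eta, sub_eq_zero] at hj
    have : ((a j : ℕ) : ZMod 4) = ((b j : ℕ) : ZMod 4) := hj
    rw [ZMod.natCast_eq_natCast_iff, Nat.ModEq] at this
    rw [Nat.mod_eq_of_lt (a j).isLt, Nat.mod_eq_of_lt (b j).isLt] at this
    exact Fin.ext this
  have key : ∀ S : Finset (Fin m → Fin 4), ∀ c : (Fin m → Fin 4) → F,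
      (∑ x ∈ S, c x • w x) = 0 → ∀ a ∈ S, c a = 0 := by
    intro S
    induction S using Finset.strongInduction with
    | _ S ih =>
      intro c hsum a ha
      by_cases hb : ∃ b ∈ S, b ≠ a
      · obtain ⟨b, hbS, hba⟩ := hb
        obtain ⟨k, hk⟩ := hsep a b (fun h => hba h.symm)
        have h0 : u k * (∑ x ∈ S, c x • w x) = 0 := by rw [hsum, mul_zero]
        rw [Finset.mul_sum] at h0
        have h1 : (∑ x ∈ S, (i ^ cc k x * c x) • w x) * u k = 0 := by
          rw [Finset.sum_mul, ← h0]
          apply Finset.sum_congr rfl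
          intro x _
          rw [smul_mul_assoc, mul_smul_comm, hwB k x, smul_smul, mul_comm (c x)]
        have h2 : (∑ x ∈ S, (i ^ cc k x * c x) • w x) = 0 := by
          rcases mul_eq_zero.mp h1 with h | h
          · exact h
          · exact absurd h (hu0 k)
        have h4 : ∑ x ∈ S, ((i ^ cc k x - i ^ cc k b) * c x) • w x = 0 := by
          have hpt : ∀ x ∈ S, ((i ^ cc k x - i ^ cc k b) * c x) • w x =
              (i ^ cc k x * c x) • w x - i ^ cc k b • (c x • w x) := by
            intro x _
            rw [smul_smul, ← sub_smul]
            congr 1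
            ring
          rw [Finset.sum_congr rfl hpt, Finset.sum_sub_distrib, h2, ← Finset.smul_sum,
            hsum, smul_zero, sub_zero]
        have h3 : ∑ x ∈ S.erase b, ((i ^ cc k x - i ^ cc k b) * c x) • w x = 0 := by
          rw [← Finset.add_sum_erase _ _ hbS, sub_self, zero_mul, zero_smul, zero_add] at h4
          exact h4
        have h5 := ih (S.erase b) (Finset.erase_ssubset hbS) _ h3 a
          (Finset.mem_erase.mpr ⟨fun h => hba h.symm, ha⟩)
        have h6 : i ^ cc k a - i ^ cc k b ≠ 0 := by
          rw [sub_ne_zero]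
          intro h
          exact hk (aux_ipow_inj hi h)
        rcases mul_eq_zero.mp h5 with h | h
        · exact absurd h h6
        · exact h
      · push_neg at hb
        have hS : S = {a} := Finset.eq_singleton_iff_unique_mem.mpr
          ⟨ha, fun x hx => hb x hx⟩
        rw [hS, Finset.sum_singleton] at hsum
        rcases smul_eq_zero.mp hsum with h | h
        · exact h
        · exact absurd h (hw0 a)
  rw [Fintype.linearIndependent_iff]
  intro c hc a
  exact key Finset.univ c hc a (Finset.mem_univ a)
end Aux

/-- If `dim_F A = 16^n` (with `n ≥ 1`), there do not exist nonzero elements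
`v₁, …, v_{2n+2}` of `A` with `vₖ⁴ ∈ F·1` for all `k` and `vₖ vⱼ = i · vⱼ vₖ`
for all `1 ≤ k < j ≤ 2n+2`. -/
theorem statement15 {F A : Type*} [Field F] [CharZero F] [DivisionRing A] [Algebra F A]
    (i : F) (hi : i ^ 2 = -1) (n : ℕ) (hn : 1 ≤ n)
    (hdim : Module.finrank F A = 16 ^ n) :
    ¬ ∃ v : ℕ → A,
      (∀ k, 1 ≤ k → k ≤ 2 * n + 2 → v k ≠ 0) ∧
      (∀ k, 1 ≤ k → k ≤ 2 * n + 2 → (v k) ^ 4 ∈ Set.range (algebraMap F A)) ∧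
      (∀ k j, 1 ≤ k → k < j → j ≤ 2 * n + 2 → v k * v j = i • (v j * v k)) := by
  rintro ⟨v, hv0, hv4, hcom⟩
  set m := 2 * n + 2 with hm
  set u : Fin m → A := fun k => v ((k : ℕ) + 1) with hu
  have hu0 : ∀ k : Fin m, u k ≠ 0 := by
    intro k
    have hk := k.isLt
    exact hv0 ((k : ℕ) + 1) (by omega) (by omega)
  have hcomm : ∀ k j : Fin m, k < j → u k * u j = i • (u j * u k) := by
    intro k j hkj
    have hkj' : (k : ℕ) < (j : ℕ) := hkj
    have hj := j.isLt
    exact hcom ((k : ℕ) + 1) ((j : ℕ) + 1) (by omega) (by omega) (by omega)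
  have hli := aux_main (m := m) (t := n) hm i hi u hu0 hcomm
  have hfd : FiniteDimensional F A :=
    FiniteDimensional.of_finrank_pos (by rw [hdim]; positivity)
  have hcard := hli.fintype_card_le_finrank
  rw [hdim] at hcard
  have hc : Fintype.card (Fin m → Fin 4) = 4 ^ m := by
    simp [Fintype.card_fun]
  rw [hc] at hcard
  have h16 : (4 : ℕ) ^ m = 16 ^ (n + 1) := by
    have hmn : m = 2 * (n + 1) := by omega
    rw [hmn, show (16 : ℕ) = 4 ^ 2 from rfl, ← pow_mul]
  rw [h16] at hcard
  have hlt : (16 : ℕ) ^ n < 16 ^ (n + 1) := Nat.pow_lt_pow_right (by norm_num) (by omega)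
  exact (not_le.mpr hlt) hcard
end
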